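/- Assume the highest root θ is fundamental and let α_θ be the unique simple root with (θ, α_θ) ≠ 0. Then α_θ is a long root, [θ:α_θ] = 2, and the sum Σ_β [θ:β], taken over the simple roots β adjacent to α_θ, equals 3. -/

import Mathlib

/-!
The highest root `θ` is dominant (it pairs only with `α_θ`, positively), and a dominant root lying
above the dominant root in the `W`-orbit of any other root is at least as long, so `θ` is long.
The integer `⟨α_θ, θ∨⟩` is then positive and at most `1`, whence `|α_θ| = |θ|`. Expanding
`(θ, θ)` in the simple roots leaves only `[θ:α_θ] (α_θ, θ)`, so `[θ:α_θ] = 2`. Expanding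
`(θ, α_θ) = |α_θ|²/2` leaves `2|α_θ|²` plus the adjacent simple roots `β`, each of which has
`2 (β, α_θ) = -|α_θ|²` because `α_θ` is long; hence `Σ [θ:β] = 3`.
-/

open scoped InnerProductSpace

/-- An irreducible reduced crystallographic root system, spanning a finite-dimensional
real inner product space, together with a fixed base (set of simple roots) and the
coefficient function expressing each root in the base. -/
structure RootSystemData (V : Type) [NormedAddCommGroup V] [InnerProductSpace ℝ V]
    [FiniteDimensional ℝ V] where
  roots : Set V
  finite : roots.Finite
  nonzero : ∀ γ ∈ roots, γ ≠ 0
  spans : Submodule.span ℝ roots = ⊤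
  reflClosed : ∀ α ∈ roots, ∀ β ∈ roots, β - (2 * ⟪β, α⟫_ℝ / ⟪α, α⟫_ℝ) • α ∈ roots
  crystal : ∀ α ∈ roots, ∀ β ∈ roots, ∃ k : ℤ, 2 * ⟪β, α⟫_ℝ / ⟪α, α⟫_ℝ = (k : ℝ)
  reduced : ∀ α ∈ roots, ∀ t : ℝ, t • α ∈ roots → t = 1 ∨ t = -1
  irred : ∀ A B : Set V, roots = A ∪ B → (∀ a ∈ A, ∀ b ∈ B, ⟪a, b⟫_ℝ = 0) →
    A = ∅ ∨ B = ∅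
  simples : Finset V
  simples_sub : ↑simples ⊆ roots
  simples_indep : LinearIndependent ℝ (Subtype.val : {x : V // x ∈ simples} → V)
  coeff : V → V → ℤ
  coeff_spec : ∀ γ ∈ roots, γ = ∑ α ∈ simples, coeff γ α • α
  coeff_sign : ∀ γ ∈ roots, (∀ α ∈ simples, 0 ≤ coeff γ α) ∨ (∀ α ∈ simples, coeff γ α ≤ 0)

namespace RootSystemData

variable {V : Type} [NormedAddCommGroup V] [InnerProductSpace ℝ V] [FiniteDimensional ℝ V]
variable (R : RootSystemData V)

/-- The set of positive roots `Δ⁺` (w.r.t. the base `simples`). -/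
def posRoots : Set V := {γ | γ ∈ R.roots ∧ ∀ α ∈ R.simples, 0 ≤ R.coeff γ α}

/-- The partial order `μ ≼ ν`: `ν - μ` is a nonnegative integral combination of simple roots. -/
def rle (μ ν : V) : Prop := ∃ c : V → ℕ, ν - μ = ∑ α ∈ R.simples, (c α : ℤ) • α

/-- `θ` is the highest root. -/
def IsHighest (θ : V) : Prop := θ ∈ R.posRoots ∧ ∀ γ ∈ R.roots, R.rle γ θ

/-- `γ` is a long root: a root of maximal length. -/
def IsLong (γ : V) : Prop := γ ∈ R.roots ∧ ∀ γ' ∈ R.roots, ‖γ'‖ ≤ ‖γ‖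

/-- `I` is an upper ideal of `(Δ⁺, ≼)`. -/
def IsUpperIdeal (I : Set V) : Prop :=
  I ⊆ R.posRoots ∧ ∀ ν ∈ I, ∀ γ ∈ R.posRoots, R.rle ν γ → γ ∈ I

/-- `I` is an abelian upper ideal of `(Δ⁺, ≼)`. -/
def IsAbelianIdeal (I : Set V) : Prop :=
  R.IsUpperIdeal I ∧ ∀ γ₁ ∈ I, ∀ γ₂ ∈ I, γ₁ + γ₂ ∉ R.roots

/-- The set of minimal elements of `M ⊆ Δ⁺` w.r.t. `≼`. -/
def minSet (M : Set V) : Set V := {γ | γ ∈ M ∧ ∀ ν ∈ M, R.rle ν γ → ν = γ}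

/-- The set of maximal elements of `M ⊆ Δ⁺` w.r.t. `≼`. -/
def maxSet (M : Set V) : Set V := {γ | γ ∈ M ∧ ∀ ν ∈ M, R.rle γ ν → ν = γ}

/-- `S(I) = {α ∈ Π : ∃ γ ∈ min(I), γ - α ∈ Δ⁺ ∪ {0}}`; the complement `Π ∖ S(I)` is the
set of simple roots of the standard Levi subalgebra of the normaliser of the ideal `I`. -/
def normS (I : Set V) : Set V :=
  {α | α ∈ R.simples ∧ ∃ γ ∈ R.minSet I, (γ - α ∈ R.posRoots ∨ γ = α)}

/-- `H = {γ ∈ Δ⁺ : (γ, θ) ≠ 0}`. -/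
def Hset (θ : V) : Set V := {γ | γ ∈ R.posRoots ∧ ⟪γ, θ⟫_ℝ ≠ 0}

/-- `deg_S(γ) = Σ_{α ∈ S} [γ:α]`. -/
def degS (S : Finset V) (γ : V) : ℤ := ∑ α ∈ S, R.coeff γ α

/-- `I_S = {γ ∈ Δ⁺ : deg_S(γ) ≥ ⌊d(S)/2⌋ + 1}`, where `d(S) = deg_S(θ)`: the abelian ideal
`g(≥ ⌊hot(p)/2⌋ + 1)` associated with the standard parabolic subalgebra `p(S)`. -/
def idealS (S : Finset V) (θ : V) : Set V :=
  {γ | γ ∈ R.posRoots ∧ R.degS S θ / 2 + 1 ≤ R.degS S γ}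

/-- The highest root `θ` is fundamental with `α_θ` the unique simple root not
orthogonal to `θ`, and `(θ, α_θ∨) = 1`. -/
def IsFundamental (θ αθ : V) : Prop :=
  αθ ∈ R.simples ∧ ⟪θ, αθ⟫_ℝ ≠ 0 ∧ (∀ β ∈ R.simples, ⟪θ, β⟫_ℝ ≠ 0 → β = αθ) ∧
    2 * ⟪θ, αθ⟫_ℝ / ⟪αθ, αθ⟫_ℝ = 1

end RootSystemData

/-- The reflection `s_α`. -/
noncomputable def rsRefl {V : Type} [NormedAddCommGroup V] [InnerProductSpace ℝ V] (α x : V) : V :=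
  x - (2 * ⟪x, α⟫_ℝ / ⟪α, α⟫_ℝ) • α

/-- The element of the Weyl group given by the word `l = [α₁, …, α_m]`,
namely `s_{α₁} ∘ ⋯ ∘ s_{α_m}`; its inverse is `wordMap l.reverse`. -/
noncomputable def wordMap {V : Type} [NormedAddCommGroup V] [InnerProductSpace ℝ V] (l : List V) : V → V :=
  l.foldr (fun α f => rsRefl α ∘ f) id

lemma inner_rsRefl_self {V : Type} [NormedAddCommGroup V] [InnerProductSpace ℝ V] (α x : V) :
    ⟪rsRefl α x, rsRefl α x⟫_ℝ = ⟪x, x⟫_ℝ := by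
  rcases eq_or_ne α 0 with rfl | hα
  · simp [rsRefl]
  have hαα : ⟪α, α⟫_ℝ ≠ 0 := inner_self_ne_zero.mpr hα
  simp only [rsRefl, inner_sub_left, inner_sub_right, real_inner_smul_left,
    real_inner_smul_right, real_inner_comm α x]
  field_simp
  ring

namespace RootSystemData

variable {V : Type} [NormedAddCommGroup V] [InnerProductSpace ℝ V] [FiniteDimensional ℝ V]
variable (R : RootSystemData V)

def IsDominant (x : V) : Prop := ∀ α ∈ R.simples, 0 ≤ ⟪x, α⟫_ℝ

lemma inner_self_pos {γ : V} (hγ : γ ∈ R.roots) : 0 < ⟪γ, γ⟫_ℝ :=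
  real_inner_self_pos.mpr (R.nonzero γ hγ)

lemma exists_int_two_inner_eq {α β : V} (hα : α ∈ R.roots) (hβ : β ∈ R.roots) :
    ∃ k : ℤ, 2 * ⟪β, α⟫_ℝ = k * ⟪α, α⟫_ℝ :=
  let ⟨k, hk⟩ := R.crystal α hα β hβ
  ⟨k, (div_eq_iff (R.inner_self_pos hα).ne').mp hk⟩

lemma rsRefl_mem {α β : V} (hα : α ∈ R.roots) (hβ : β ∈ R.roots) : rsRefl α β ∈ R.roots :=
  R.reflClosed α hα β hβ

lemma neg_mem {γ : V} (hγ : γ ∈ R.roots) : -γ ∈ R.roots := by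
  have h := R.reflClosed γ hγ γ hγ
  rwa [mul_div_assoc, div_self (R.inner_self_pos hγ).ne', mul_one, two_smul,
    sub_add_cancel_left] at h

lemma eq_of_sum_smul_eq {f g : V → ℝ}
    (h : ∑ α ∈ R.simples, f α • α = ∑ α ∈ R.simples, g α • α) :
    ∀ α ∈ R.simples, f α = g α := by
  have hzero : ∑ i : R.simples, (f i - g i) • (i : V) = 0 := by
    rw [Finset.sum_coe_sort R.simples (fun α => (f α - g α) • α)]
    simp only [sub_smul, Finset.sum_sub_distrib, h, sub_self]
  intro α hα
  exact sub_eq_zero.mp (Fintype.linearIndependent_iff.mp R.simples_indep _ hzero ⟨α, hα⟩)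

lemma coeff_eq_of_eq_sum {γ : V} (hγ : γ ∈ R.roots) {f : V → ℤ}
    (h : γ = ∑ α ∈ R.simples, f α • α) : ∀ α ∈ R.simples, R.coeff γ α = f α := by
  have hreal : ∀ c : V → ℤ, ∑ α ∈ R.simples, c α • α = ∑ α ∈ R.simples, (c α : ℝ) • α :=
    fun c => Finset.sum_congr rfl fun α _ => (Int.cast_smul_eq_zsmul ℝ _ _).symm
  intro α hα
  exact_mod_cast R.eq_of_sum_smul_eq (f := fun α => (R.coeff γ α : ℝ)) (g := fun α => (f α : ℝ))
    (by rw [← hreal, ← hreal, ← R.coeff_spec γ hγ, ← h]) α hα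

lemma inner_eq_sum_coeff_mul {γ : V} (hγ : γ ∈ R.roots) (y : V) :
    ⟪γ, y⟫_ℝ = ∑ α ∈ R.simples, (R.coeff γ α : ℝ) * ⟪α, y⟫_ℝ := by
  conv_lhs => rw [R.coeff_spec γ hγ]
  rw [sum_inner]
  exact Finset.sum_congr rfl fun α _ => by rw [← Int.cast_smul_eq_zsmul ℝ, real_inner_smul_left]

lemma two_inner_eq_neg_or_of_inner_neg {δ ε : V} (hδ : δ ∈ R.roots) (hε : ε ∈ R.roots)
    (hneg : ⟪δ, ε⟫_ℝ < 0) (hne : δ + ε ≠ 0) :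
    2 * ⟪δ, ε⟫_ℝ = -⟪δ, δ⟫_ℝ ∨ 2 * ⟪δ, ε⟫_ℝ = -⟪ε, ε⟫_ℝ := by
  obtain ⟨n, hn⟩ := R.exists_int_two_inner_eq hδ hε
  obtain ⟨m, hm⟩ := R.exists_int_two_inner_eq hε hδ
  rw [real_inner_comm] at hn
  have hδδ := R.inner_self_pos hδ
  have hεε := R.inner_self_pos hε
  have hn0 : n < 0 := (Int.cast_lt_zero (R := ℝ)).mp (by nlinarith)
  have hm0 : m < 0 := (Int.cast_lt_zero (R := ℝ)).mp (by nlinarith)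
  by_contra! h
  have hn2 : (n : ℝ) ≤ -2 := by
    have : n ≠ -1 := fun h1 => h.1 (by rw [hn, h1]; push_cast; ring)
    exact_mod_cast (show n ≤ -2 by omega)
  have hm2 : (m : ℝ) ≤ -2 := by
    have : m ≠ -1 := fun h1 => h.2 (by rw [hm, h1]; push_cast; ring)
    exact_mod_cast (show m ≤ -2 by omega)
  -- both Cartan integers at most `-2` would make `‖δ + ε‖² ≤ 0`
  have hsum : 0 < ⟪δ + ε, δ + ε⟫_ℝ := real_inner_self_pos.mpr hne
  rw [inner_add_add_self, real_inner_comm δ ε] at hsum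
  nlinarith [mul_le_mul_of_nonneg_right hn2 hδδ.le, mul_le_mul_of_nonneg_right hm2 hεε.le]

lemma add_mem_of_inner_neg {δ ε : V} (hδ : δ ∈ R.roots) (hε : ε ∈ R.roots)
    (hneg : ⟪δ, ε⟫_ℝ < 0) (hne : δ + ε ≠ 0) : δ + ε ∈ R.roots := by
  have hδδ := (R.inner_self_pos hδ).ne'
  have hεε := (R.inner_self_pos hε).ne'
  rcases R.two_inner_eq_neg_or_of_inner_neg hδ hε hneg hne with h | h
  · have hmem := R.reflClosed δ hδ ε hε
    rwa [real_inner_comm, h, neg_div, div_self hδδ, neg_one_smul, sub_neg_eq_add,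
      add_comm] at hmem
  · have hmem := R.reflClosed ε hε δ hδ
    rwa [h, neg_div, div_self hεε, neg_one_smul, sub_neg_eq_add] at hmem

lemma two_inner_eq_neg_of_inner_self_le {δ ε : V} (hδ : δ ∈ R.roots) (hε : ε ∈ R.roots)
    (hneg : ⟪δ, ε⟫_ℝ < 0) (hne : δ + ε ≠ 0) (hle : ⟪ε, ε⟫_ℝ ≤ ⟪δ, δ⟫_ℝ) :
    2 * ⟪δ, ε⟫_ℝ = -⟪δ, δ⟫_ℝ := by
  rcases R.two_inner_eq_neg_or_of_inner_neg hδ hε hneg hne with h | h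
  · exact h
  obtain ⟨n, hn⟩ := R.exists_int_two_inner_eq hδ hε
  rw [real_inner_comm] at hn
  have hδδ := R.inner_self_pos hδ
  have hn1 : n = -1 := by
    have h0 : n < 0 := (Int.cast_lt_zero (R := ℝ)).mp (by nlinarith)
    have h1 : -1 ≤ n := by exact_mod_cast (show (-1 : ℝ) ≤ n by nlinarith)
    omega
  rw [hn, hn1]
  push_cast
  ring

lemma add_ne_zero_of_mem_simples {α β : V} (hα : α ∈ R.simples) (hβ : β ∈ R.simples)
    (hne : α ≠ β) : α + β ≠ 0 := by
  classical
  intro h0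
  have hsum : ∑ x ∈ R.simples,
      ((if x = α then (1 : ℝ) else 0) + (if x = β then (1 : ℝ) else 0)) • x
      = ∑ x ∈ R.simples, (0 : ℝ) • x := by
    simp only [add_smul, ite_smul, one_smul, zero_smul, Finset.sum_add_distrib,
      Finset.sum_ite_eq', if_pos hα, if_pos hβ, Finset.sum_const_zero, h0]
  simpa [hne] using R.eq_of_sum_smul_eq hsum α hα

lemma inner_nonpos_of_mem_simples {α β : V} (hα : α ∈ R.simples) (hβ : β ∈ R.simples)
    (hne : α ≠ β) : ⟪α, β⟫_ℝ ≤ 0 := by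
  classical
  by_contra! hpos
  have hαβ : α - β ∈ R.roots := by
    rw [sub_eq_add_neg]
    refine R.add_mem_of_inner_neg (R.simples_sub hα) (R.neg_mem (R.simples_sub hβ))
      (by rwa [inner_neg_right, neg_lt_zero]) ?_
    rwa [← sub_eq_add_neg, sub_ne_zero]
  have hcoeff := R.coeff_eq_of_eq_sum hαβ
    (f := fun x => (if x = α then 1 else 0) - (if x = β then 1 else 0)) (by
      simp only [sub_smul, ite_smul, one_smul, zero_smul, Finset.sum_sub_distrib,
        Finset.sum_ite_eq', if_pos hα, if_pos hβ])
  have h1 : R.coeff (α - β) α = 1 := by simpa [hne] using hcoeff α hα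
  have h2 : R.coeff (α - β) β = -1 := by simpa [Ne.symm hne] using hcoeff β hβ
  rcases R.coeff_sign (α - β) hαβ with h | h
  · exact absurd (h β hβ) (by omega)
  · exact absurd (h α hα) (by omega)

lemma inner_sub_nonneg_of_rle {μ ν x : V} (h : R.rle μ ν) (hx : R.IsDominant x) :
    0 ≤ ⟪ν - μ, x⟫_ℝ := by
  obtain ⟨c, hc⟩ := h
  rw [hc, sum_inner]
  refine Finset.sum_nonneg fun α hα => ?_
  rw [natCast_zsmul, ← Nat.cast_smul_eq_nsmul ℝ, real_inner_smul_left, real_inner_comm]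
  exact mul_nonneg (Nat.cast_nonneg _) (hx α hα)

lemma inner_self_le_of_rle {δ θ : V} (h : R.rle δ θ) (hδ : R.IsDominant δ)
    (hθ : R.IsDominant θ) : ⟪δ, δ⟫_ℝ ≤ ⟪θ, θ⟫_ℝ := by
  have h₁ := R.inner_sub_nonneg_of_rle h hθ
  have h₂ := R.inner_sub_nonneg_of_rle h hδ
  rw [inner_sub_left] at h₁ h₂
  linarith [real_inner_comm θ δ]

lemma sum_coeff_rsRefl {α δ : V} (hα : α ∈ R.simples) (hδ : δ ∈ R.roots) {k : ℤ}
    (hk : 2 * ⟪δ, α⟫_ℝ = k * ⟪α, α⟫_ℝ) :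
    ∑ x ∈ R.simples, R.coeff (rsRefl α δ) x = ∑ x ∈ R.simples, R.coeff δ x - k := by
  classical
  have hαα := (R.inner_self_pos (R.simples_sub hα)).ne'
  have hrefl : rsRefl α δ = ∑ x ∈ R.simples, (R.coeff δ x - if x = α then k else 0) • x := by
    simp only [sub_smul, Finset.sum_sub_distrib, ite_smul, zero_smul, Finset.sum_ite_eq',
      if_pos hα, ← R.coeff_spec δ hδ, rsRefl, hk, mul_div_assoc, div_self hαα, mul_one,
      Int.cast_smul_eq_zsmul]
  rw [Finset.sum_congr rfl (R.coeff_eq_of_eq_sum (R.rsRefl_mem (R.simples_sub hα) hδ) hrefl),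
    Finset.sum_sub_distrib, Finset.sum_ite_eq', if_pos hα]

lemma exists_isDominant_inner_self_eq {γ : V} (hγ : γ ∈ R.roots) :
    ∃ δ ∈ R.roots, ⟪δ, δ⟫_ℝ = ⟪γ, γ⟫_ℝ ∧ R.IsDominant δ := by
  set O : Set V := {x | x ∈ R.roots ∧ ⟪x, x⟫_ℝ = ⟪γ, γ⟫_ℝ}
  obtain ⟨δ, ⟨hδ, hδγ⟩, hmax⟩ := Set.exists_max_image O
    (fun x => ∑ α ∈ R.simples, R.coeff x α) (R.finite.subset fun x hx => hx.1) ⟨γ, hγ, rfl⟩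
  refine ⟨δ, hδ, hδγ, fun α hα => ?_⟩
  by_contra! hlt
  have hαr := R.simples_sub hα
  obtain ⟨k, hk⟩ := R.exists_int_two_inner_eq hαr hδ
  have hk0 : k < 0 := by
    have : (k : ℝ) < 0 := by nlinarith [R.inner_self_pos hαr]
    exact_mod_cast this
  -- reflecting in `α` raises the height by `-k > 0` and keeps the length
  have hreflO : rsRefl α δ ∈ O := ⟨R.rsRefl_mem hαr hδ, by rw [inner_rsRefl_self, hδγ]⟩
  have := hmax _ hreflO
  rw [R.sum_coeff_rsRefl hα hδ hk] at this
  omega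

variable {R}

lemma IsHighest.inner_self_le {θ : V} (hθ : R.IsHighest θ) (hdom : R.IsDominant θ)
    {γ : V} (hγ : γ ∈ R.roots) : ⟪γ, γ⟫_ℝ ≤ ⟪θ, θ⟫_ℝ := by
  obtain ⟨δ, hδ, hδγ, hδdom⟩ := R.exists_isDominant_inner_self_eq hγ
  exact hδγ ▸ R.inner_self_le_of_rle (hθ.2 δ hδ) hδdom hdom

namespace IsFundamental

variable {θ αθ : V} (hfund : R.IsFundamental θ αθ)
include hfund

lemma two_inner_eq : 2 * ⟪θ, αθ⟫_ℝ = ⟪αθ, αθ⟫_ℝ :=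
  (div_eq_one_iff_eq (R.inner_self_pos (R.simples_sub hfund.1)).ne').mp hfund.2.2.2

lemma inner_eq_zero {β : V} (hβ : β ∈ R.simples) (hne : β ≠ αθ) : ⟪β, θ⟫_ℝ = 0 := by
  rw [real_inner_comm]
  by_contra h
  exact hne (hfund.2.2.1 β hβ h)

lemma isDominant : R.IsDominant θ := by
  intro β hβ
  rcases eq_or_ne β αθ with rfl | hne
  · linarith [hfund.two_inner_eq, R.inner_self_pos (R.simples_sub hβ)]
  · rw [real_inner_comm, hfund.inner_eq_zero hβ hne]

lemma inner_self_eq (hθ : R.IsHighest θ) : ⟪αθ, αθ⟫_ℝ = ⟪θ, θ⟫_ℝ := by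
  have hα := R.simples_sub hfund.1
  have hθr := hθ.1.1
  obtain ⟨k, hk⟩ := R.exists_int_two_inner_eq hθr hα
  rw [real_inner_comm, hfund.two_inner_eq] at hk
  have hk0 : 0 < k :=
    (Int.cast_pos (R := ℝ)).mp (by nlinarith [R.inner_self_pos hα, R.inner_self_pos hθr])
  have hk1 : (1 : ℝ) ≤ k := by exact_mod_cast hk0
  nlinarith [hθ.inner_self_le hfund.isDominant hα, R.inner_self_pos hθr]

lemma isLong (hθ : R.IsHighest θ) : R.IsLong αθ := by
  refine ⟨R.simples_sub hfund.1, fun γ hγ => ?_⟩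
  have h := hθ.inner_self_le hfund.isDominant hγ
  rwa [← hfund.inner_self_eq hθ, real_inner_self_eq_norm_sq, real_inner_self_eq_norm_sq,
    sq_le_sq₀ (norm_nonneg _) (norm_nonneg _)] at h

lemma coeff_eq_two (hθ : R.IsHighest θ) : R.coeff θ αθ = 2 := by
  have hθθ : ⟪θ, θ⟫_ℝ = R.coeff θ αθ * ⟪αθ, θ⟫_ℝ := by
    rw [R.inner_eq_sum_coeff_mul hθ.1.1 θ]
    refine Finset.sum_eq_single_of_mem αθ hfund.1 fun β hβ hne => ?_
    rw [hfund.inner_eq_zero hβ hne, mul_zero]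
  have hαθ : 2 * ⟪αθ, θ⟫_ℝ = ⟪θ, θ⟫_ℝ := by
    rw [real_inner_comm, hfund.two_inner_eq, hfund.inner_self_eq hθ]
  have : (R.coeff θ αθ : ℝ) = 2 := by
    nlinarith [R.inner_self_pos hθ.1.1]
  exact_mod_cast this

lemma sum_coeff_adjacent_eq_three (hθ : R.IsHighest θ) (S : Finset V)
    (hS : (↑S : Set V) = {β : V | β ∈ R.simples ∧ β ≠ αθ ∧ ⟪β, αθ⟫_ℝ ≠ 0}) :
    ∑ β ∈ S, R.coeff θ β = 3 := by
  classical
  have hmem : ∀ β, β ∈ S ↔ β ∈ R.simples ∧ β ≠ αθ ∧ ⟪β, αθ⟫_ℝ ≠ 0 := fun β => by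
    rw [← Finset.mem_coe, hS]; rfl
  have hα := R.simples_sub hfund.1
  have hαS : αθ ∉ S := fun h => ((hmem αθ).mp h).2.1 rfl
  have hadj : ∀ β ∈ S, 2 * ⟪β, αθ⟫_ℝ = -⟪αθ, αθ⟫_ℝ := fun β hβ => by
    obtain ⟨hβ, hne, h0⟩ := (hmem β).mp hβ
    have hβr := R.simples_sub hβ
    rw [real_inner_comm]
    refine R.two_inner_eq_neg_of_inner_self_le hα hβr ?_
      (R.add_ne_zero_of_mem_simples hfund.1 hβ hne.symm) ?_
    · rw [real_inner_comm]
      exact lt_of_le_of_ne (R.inner_nonpos_of_mem_simples hβ hfund.1 hne) h0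
    · rw [hfund.inner_self_eq hθ]
      exact hθ.inner_self_le hfund.isDominant hβr
  have hsplit : ⟪θ, αθ⟫_ℝ = ∑ β ∈ insert αθ S, (R.coeff θ β : ℝ) * ⟪β, αθ⟫_ℝ := by
    rw [R.inner_eq_sum_coeff_mul hθ.1.1]
    refine (Finset.sum_subset (Finset.insert_subset hfund.1 fun β hβ => ((hmem β).mp hβ).1)
      fun β hβ hβS => ?_).symm
    have h0 : ⟪β, αθ⟫_ℝ = 0 := by
      by_contra h0
      exact hβS (Finset.mem_insert_of_mem ((hmem β).mpr
        ⟨hβ, fun h => hβS (h ▸ Finset.mem_insert_self αθ S), h0⟩))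
    rw [h0, mul_zero]
  have hSsum : ∑ β ∈ S, (R.coeff θ β : ℝ) * ⟪β, αθ⟫_ℝ
      = (∑ β ∈ S, (R.coeff θ β : ℝ)) * (-⟪αθ, αθ⟫_ℝ / 2) := by
    rw [Finset.sum_mul]
    exact Finset.sum_congr rfl fun β hβ => by rw [← hadj β hβ]; ring
  rw [Finset.sum_insert hαS, hfund.coeff_eq_two hθ, hSsum] at hsplit
  have : ((∑ β ∈ S, R.coeff θ β : ℤ) : ℝ) = 3 := by
    push_cast
    nlinarith [hfund.two_inner_eq, R.inner_self_pos hα]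
  exact_mod_cast this

end IsFundamental

end RootSystemData

/-- Theorem 4.1(ii): if `θ` is fundamental then `α_θ` is long,
`[θ:α_θ] = 2`, and the sum of `[θ:β]` over the simple roots `β` adjacent to `α_θ`
equals `3`. -/
theorem stmt9 {V : Type} [NormedAddCommGroup V] [InnerProductSpace ℝ V] [FiniteDimensional ℝ V]
    (R : RootSystemData V) (θ αθ : V) (hθ : R.IsHighest θ)
    (hfund : R.IsFundamental θ αθ) :
    R.IsLong αθ ∧ R.coeff θ αθ = 2 ∧
      ∀ S : Finset V,
        (↑S : Set V) = {β : V | β ∈ R.simples ∧ β ≠ αθ ∧ ⟪β, αθ⟫_ℝ ≠ 0} →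
        ∑ β ∈ S, R.coeff θ β = 3 :=
  ⟨hfund.isLong hθ, hfund.coeff_eq_two hθ, hfund.sum_coeff_adjacent_eq_three hθ⟩
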